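/- Assume dim_k V = 4n with n ≥ 1. Then for every x ∈ H with x ≠ 0 and Q(x) = 0, the form ω_x has rank 2n; equivalently, the radical {u ∈ V : ω_x(u, v) = 0 for all v ∈ V} has k-dimension 2n. -/

import Mathlib

/-!
Since `Q x = 0`, the operator `ι x` squares to zero on `V`, so its range lies in its kernel.
Nondegeneracy of `B` gives `y` with `B x y ≠ 0`, and the Clifford relation
`ι x ι y + ι y ι x = 2 B(x, y)` shows that every `u` killed by `ι x` equals
`ι x (ι y u / 2B(x, y))`. Hence range and kernel coincide, and rank–nullity splits `V` into two
halves of dimension `2n`. Finally `ω_x` has the same radical as `ι x` because `τ` is nondegenerate.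
-/

open CliffordAlgebra

namespace CliffordAlgebra

variable {R M V : Type*} [CommRing R] [AddCommGroup M] [Module R M] {Q : QuadraticForm R M}
  [AddCommGroup V] [Module (CliffordAlgebra Q) V]

theorem ι_smul_ι_smul_of_isotropic {x : M} (hx : Q x = 0) (u : V) : ι Q x • ι Q x • u = 0 := by
  rw [smul_smul, ι_sq_scalar, hx, map_zero, zero_smul]

variable [Module R V] [IsScalarTower R (CliffordAlgebra Q) V]

theorem ι_smul_ι_smul_add_swap (x y : M) (u : V) :
    ι Q x • ι Q y • u + ι Q y • ι Q x • u = QuadraticMap.polar Q x y • u := by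
  rw [smul_smul, smul_smul, ← add_smul, ι_mul_ι_add_swap, algebraMap_smul]

theorem range_ι_smul_eq_ker_of_isUnit_polar {x y : M} (hx : Q x = 0)
    (hxy : IsUnit (QuadraticMap.polar Q x y)) :
    LinearMap.range (DistribSMul.toLinearMap R V (ι Q x)) =
      LinearMap.ker (DistribSMul.toLinearMap R V (ι Q x)) := by
  refine le_antisymm ?_ fun u hu => ?_
  · rintro _ ⟨u, rfl⟩
    exact ι_smul_ι_smul_of_isotropic hx u
  · have hu : ι Q x • u = 0 := hu
    have hanti := ι_smul_ι_smul_add_swap (Q := Q) x y u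
    rw [hu, smul_zero, add_zero] at hanti
    refine ⟨(↑hxy.unit⁻¹ : R) • ι Q y • u, ?_⟩
    rw [DistribSMul.toLinearMap_apply, smul_comm, hanti, smul_smul, hxy.val_inv_mul, one_smul]

end CliffordAlgebra

theorem QuadraticMap.polar_eq_two_mul_of_symm {R M : Type*} [CommRing R] [AddCommGroup M]
    [Module R M] {Q : QuadraticForm R M} {B : LinearMap.BilinForm R M} (hBQ : ∀ x, B x x = Q x)
    (hBsymm : ∀ x y, B x y = B y x) (x y : M) : QuadraticMap.polar Q x y = 2 * B x y := by
  have hQ : Q = B.toQuadraticMap := QuadraticMap.ext fun x => (hBQ x).symm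
  rw [hQ, LinearMap.BilinMap.polar_toQuadraticMap, hBsymm y x, two_mul]

theorem LinearMap.two_mul_finrank_ker_of_range_eq_ker {K V : Type*} [DivisionRing K]
    [AddCommGroup V] [Module K V] [FiniteDimensional K V] {f : V →ₗ[K] V}
    (hf : LinearMap.range f = LinearMap.ker f) :
    2 * Module.finrank K (LinearMap.ker f) = Module.finrank K V := by
  rw [← f.finrank_range_add_finrank_ker, hf, two_mul]

theorem omega_isotropic_rank
    {k : Type*} [Field k] [CharZero k]
    {H : Type*} [AddCommGroup H] [Module k H]
    (Q : QuadraticForm k H)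
    (B : LinearMap.BilinForm k H)
    (hBQ : ∀ x, B x x = Q x)
    (hBsymm : ∀ x y, B x y = B y x)
    (hBnd : LinearMap.BilinForm.Nondegenerate B)
    {V : Type*} [AddCommGroup V] [Module k V] [FiniteDimensional k V]
    [Module (CliffordAlgebra Q) V] [IsScalarTower k (CliffordAlgebra Q) V]
    (τ : LinearMap.BilinForm k V)
    (hτnd : LinearMap.BilinForm.Nondegenerate τ)
    (n : ℕ) (hdim : Module.finrank k V = 4 * n)
    (x : H) (hx : x ≠ 0) (hQx : Q x = 0) :
    Module.finrank k
      (LinearMap.ker (τ ∘ₗ DistribMulAction.toLinearMap k V (ι Q x))) = 2 * n := by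
  obtain ⟨y, hy⟩ : ∃ y, B x y ≠ 0 := by
    by_contra! h
    exact hx (hBnd.1 x h)
  have hpolar : IsUnit (QuadraticMap.polar Q x y) := by
    rw [QuadraticMap.polar_eq_two_mul_of_symm hBQ hBsymm]
    exact (mul_ne_zero two_ne_zero hy).isUnit
  have hhalf := LinearMap.two_mul_finrank_ker_of_range_eq_ker
    (range_ι_smul_eq_ker_of_isUnit_polar (V := V) hQx hpolar)
  rw [LinearMap.ker_comp_of_ker_eq_bot _ (LinearMap.separatingLeft_iff_ker_eq_bot.mp hτnd.1)]
  unfold DistribMulAction.toLinearMap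
  omega
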